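/- The countable concept class 𝒞 = ⋃_{n≥1} 𝒞_n shatters every finite subset of the open interval (0,1): for every finite set F ⊆ (0,1) and every subset G ⊆ F there exist n ≥ 1 and C ∈ 𝒞_n with C ∩ F = G. -/

import Mathlib

/-- `IntClass n`: unions of fewer than `√n` closed intervals `[i/n, (i+1)/n]`,
`0 ≤ i ≤ n - 1` (intervals of order `n`), including the empty union. -/
def IntClass (n : ℕ) : Set (Set ℝ) :=
  {C | ∃ s : Finset ℕ, s ⊆ Finset.range n ∧ (s.card : ℝ) < Real.sqrt n ∧
    C = ⋃ i ∈ s, Set.Icc ((i : ℝ) / n) (((i : ℝ) + 1) / n)}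

/-!
Choose `n` larger than both `(#F)²` and the inverse of the smallest gap between points of `F`,
and let `C` be the union of the intervals of order `n` that contain a point of `G`. There are at
most `#F < √n` of them, and each has length `1/n`, smaller than every gap, so it meets `F` only in
the point of `G` it was chosen for.
-/

open Set

abbrev orderInterval (n i : ℕ) : Set ℝ := Icc ((i : ℝ) / n) (((i : ℝ) + 1) / n)

theorem Finset.exists_pos_le_dist_of_ne {X : Type*} [MetricSpace X] (F : Finset X) :
    ∃ δ > 0, ∀ x ∈ F, ∀ y ∈ F, x ≠ y → δ ≤ dist x y := by
  rcases F.offDiag.eq_empty_or_nonempty with hF | hF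
  · refine ⟨1, one_pos, fun x hx y hy hxy => ?_⟩
    simpa [hF] using (Finset.mem_offDiag.mpr ⟨hx, hy, hxy⟩ : (x, y) ∈ F.offDiag)
  · obtain ⟨p, hp, hmin⟩ := F.offDiag.exists_min_image (fun q => dist q.1 q.2) hF
    exact ⟨dist p.1 p.2, dist_pos.mpr (Finset.mem_offDiag.mp hp).2.2,
      fun x hx y hy hxy => hmin (x, y) (Finset.mem_offDiag.mpr ⟨hx, hy, hxy⟩)⟩

section OrderIntervals

variable {n : ℕ} {x : ℝ}

theorem mem_orderInterval_floor (hn : 0 < n) (hx : 0 ≤ x) : x ∈ orderInterval n ⌊x * n⌋₊ := by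
  have hn' : (0 : ℝ) < n := by exact_mod_cast hn
  constructor
  · rw [div_le_iff₀ hn']
    exact Nat.floor_le (by positivity)
  · rw [le_div_iff₀ hn']
    exact (Nat.lt_floor_add_one _).le

theorem floor_mul_lt_self (hn : 0 < n) (hx : x ∈ Ico (0 : ℝ) 1) : ⌊x * n⌋₊ < n := by
  have hn' : (0 : ℝ) < n := by exact_mod_cast hn
  rw [Nat.floor_lt (mul_nonneg hx.1 hn'.le)]
  simpa using mul_lt_mul_of_pos_right hx.2 hn'

theorem dist_le_of_mem_orderInterval {i : ℕ} {y : ℝ} (hn : 0 < n)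
    (hx : x ∈ orderInterval n i) (hy : y ∈ orderInterval n i) : dist x y ≤ 1 / n := by
  have hn' : (n : ℝ) ≠ 0 := by exact_mod_cast hn.ne'
  calc dist x y ≤ ((i : ℝ) + 1) / n - (i : ℝ) / n := Real.dist_le_of_mem_Icc hx hy
    _ = 1 / n := by field_simp; ring

theorem iUnion_orderInterval_floor_inter_eq {F G : Finset ℝ} (hn : 0 < n)
    (hF : ∀ x ∈ F, 0 ≤ x) (hG : G ⊆ F)
    (hsep : ∀ x ∈ F, ∀ y ∈ F, x ≠ y → 1 / (n : ℝ) < dist x y) :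
    (⋃ i ∈ G.image (fun x : ℝ => ⌊x * n⌋₊), orderInterval n i) ∩ F = G := by
  ext y
  simp only [mem_inter_iff, mem_iUnion, Finset.mem_coe, Finset.mem_image, exists_prop]
  constructor
  · rintro ⟨⟨_, ⟨x, hxG, rfl⟩, hyx⟩, hyF⟩
    by_contra hyG
    have hxy : y ≠ x := fun h => hyG (h ▸ hxG)
    have hclose := dist_le_of_mem_orderInterval hn hyx
      (mem_orderInterval_floor hn (hF x (hG hxG)))
    exact (hsep y hyF x (hG hxG) hxy).not_ge hclose
  · intro hyG
    exact ⟨⟨_, ⟨y, hyG, rfl⟩, mem_orderInterval_floor hn (hF y (hG hyG))⟩, hG hyG⟩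

end OrderIntervals

theorem stmt16 (F : Finset ℝ) (hF : (F : Set ℝ) ⊆ Set.Ioo (0 : ℝ) 1)
    (G : Finset ℝ) (hG : G ⊆ F) :
    ∃ n : ℕ, 1 ≤ n ∧ ∃ C ∈ IntClass n, C ∩ (F : Set ℝ) = (G : Set ℝ) := by
  obtain ⟨δ, hδ, hgap⟩ := F.exists_pos_le_dist_of_ne
  obtain ⟨n, hn⟩ := exists_nat_gt (max ((F.card : ℝ) ^ 2) (1 / δ))
  rw [max_lt_iff] at hn
  have hnR : (0 : ℝ) < n := (sq_nonneg _).trans_lt hn.1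
  have hn0 : 0 < n := by exact_mod_cast hnR
  have hFIco : ∀ x ∈ F, x ∈ Ico (0 : ℝ) 1 := fun x hx => Ioo_subset_Ico_self (hF hx)
  have hsep : ∀ x ∈ F, ∀ y ∈ F, x ≠ y → 1 / (n : ℝ) < dist x y := fun x hx y hy hxy =>
    ((one_div_lt hnR hδ).mpr hn.2).trans_le (hgap x hx y hy hxy)
  set s := G.image (fun x : ℝ => ⌊x * n⌋₊)
  refine ⟨n, hn0, ⋃ i ∈ s, orderInterval n i, ⟨s, ?_, ?_, rfl⟩,
    iUnion_orderInterval_floor_inter_eq hn0 (fun x hx => (hFIco x hx).1) hG hsep⟩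
  · intro i hi
    obtain ⟨x, hxG, rfl⟩ := Finset.mem_image.mp hi
    exact Finset.mem_range.mpr (floor_mul_lt_self hn0 (hFIco x (hG hxG)))
  · have hcard : (s.card : ℝ) ≤ F.card := by
      exact_mod_cast Finset.card_image_le.trans (Finset.card_le_card hG)
    exact hcard.trans_lt ((Real.lt_sqrt (Nat.cast_nonneg _)).mpr hn.1)
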